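/- Let G be a group, A ⊆ G a nonempty finite set, and ε ∈ (0,1). Let X = St^ℓ_{ε²/162}(A) and fix ν ∈ (0,1) with ν ≤ |X|/|A|. Set S = St^r_{εν/9}(A) and A' = {a ∈ A : |Xa \ A| < (ε/9)|X|}. Then for any subset D ⊆ G satisfying A' ⊆ D ⊆ A'S, one has |A △ D| < ε|A|. -/

import Mathlib

open scoped Pointwise symmDiff

/-- `Stab^ℓ_N(A) = {x : |xA △ A| ≤ N}`. -/
def stabL {G : Type*} [Group G] (A : Set G) (N : ℝ) : Set G :=
  {x : G | (((x • A) ∆ A).ncard : ℝ) ≤ N}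

/-- `Stab^r_N(A) = {x : |Ax △ A| ≤ N}`. -/
def stabR {G : Type*} [Group G] (A : Set G) (N : ℝ) : Set G :=
  {x : G | (((A * {x}) ∆ A).ncard : ℝ) ≤ N}

/-- `St^ℓ_ε(A) = Stab^ℓ_{ε|A|}(A)`. -/
def stL {G : Type*} [Group G] (A : Set G) (ε : ℝ) : Set G := stabL A (ε * A.ncard)

/-- `St^r_ε(A) = Stab^r_{ε|A|}(A)`. -/
def stR {G : Type*} [Group G] (A : Set G) (ε : ℝ) : Set G := stabR A (ε * A.ncard)

/-- A family of sets shatters `S` if every subset of `S` is cut out by a member of the family. -/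
def Shatters {α : Type*} (F : Set (Set α)) (S : Set α) : Prop :=
  ∀ T ⊆ S, ∃ f ∈ F, S ∩ f = T

/-- VC-dimension of a set system: the supremum of cardinalities of finite shattered sets. -/
noncomputable def vcDim {α : Type*} (F : Set (Set α)) : ℕ∞ :=
  ⨆ (S : Finset α) (_ : Shatters F ↑S), (S.card : ℕ∞)

/-- The family of left translates `{xA : x ∈ B}`. -/
def leftFam {G : Type*} [Group G] (A B : Set G) : Set (Set G) := (fun x => x • A) '' B

/-- The family of right translates `{Ax : x ∈ B}`. -/
def rightFam {G : Type*} [Group G] (A B : Set G) : Set (Set G) := (fun x => A * {x}) '' B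

/-- `Z^ℓ_ε(A,X) = {g : min(|gX ∩ A|, |gX \ A|) ≥ ε|X|}`. -/
def Zl {G : Type*} [Group G] (A X : Set G) (ε : ℝ) : Set G :=
  {g : G | ε * X.ncard ≤ min (((g • X) ∩ A).ncard : ℝ) (((g • X) \ A).ncard : ℝ)}

/-!
Every `x ∈ X` moves `A` by at most `ε²|A|/162`. Double counting the pairs `(x, a) ∈ X × A` with
`xa ∉ A` therefore gives `|A \ A'| ≤ ε|A|/18`. An element `d = as ∉ A` of `A'S` has
`|Xd \ A| ≤ |Xa \ A| + |As \ A| < 2ε|X|/9`, so `|Xd ∩ A| ≥ 7|X|/9`; double counting the pairs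
`(x, d) ∈ X × (D \ A)` with `xd ∈ A`, where `xd ∈ A \ xA`, gives `|D \ A| ≤ ε²|A|/126`.
-/

namespace Set

theorem ncard_symmDiff_le_ncard_sdiff_add_ncard_sdiff {α : Type*} {A A' D : Set α}
    (hA : A.Finite) (hA'D : A' ⊆ D) : (A ∆ D).ncard ≤ (A \ A').ncard + (D \ A).ncard := by
  by_cases hD : (D \ A).Finite
  · exact (ncard_le_ncard (union_subset_union_left _ (sdiff_subset_sdiff_right hA'D))
      ((hA.subset sdiff_subset).union hD)).trans (ncard_union_le _ _)
  · have hAD : (A ∆ D).Infinite := Infinite.mono (fun _ => Or.inr) hD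
    rw [hAD.ncard]
    exact Nat.zero_le _

variable {G : Type*} [Group G] {A B C X : Set G}

theorem ncard_mul_singleton (X : Set G) (g : G) : (X * {g}).ncard = X.ncard := by
  rw [mul_singleton, ncard_image_of_injective _ (mul_left_injective g)]

theorem finite_of_forall_mul_singleton_inter_nonempty (hX : X.Finite) (hA : A.Finite)
    (hB : ∀ b ∈ B, (X * {b} ∩ A).Nonempty) : B.Finite :=
  (hX.inv.mul hA).subset fun b hb => by
    obtain ⟨_, ⟨x, hx, _, rfl, rfl⟩, hxb⟩ := hB b hb
    exact ⟨x⁻¹, inv_mem_inv.2 hx, _, hxb, inv_mul_cancel_left x _⟩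

theorem sum_ncard_mul_singleton_inter_eq_sum_ncard_smul_inter (hX : X.Finite) (hB : B.Finite)
    (C : Set G) :
    ∑ b ∈ hB.toFinset, (X * {b} ∩ C).ncard = ∑ x ∈ hX.toFinset, (x • B ∩ C).ncard := by
  classical
  have hright (b : G) : (X * {b} ∩ C).ncard = {x ∈ hX.toFinset | x * b ∈ C}.card := by
    rw [mul_singleton, ← image_inter_preimage,
      ncard_image_of_injective _ (mul_left_injective b), ← ncard_coe_finset]
    congr 1; ext; simp
  have hleft (x : G) : (x • B ∩ C).ncard = {b ∈ hB.toFinset | x * b ∈ C}.card := by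
    rw [← image_smul, ← image_inter_preimage,
      ncard_image_of_injective _ (MulAction.injective x), ← ncard_coe_finset]
    congr 1; ext; simp
  simp only [hright, hleft]
  exact (Finset.sum_card_bipartiteAbove_eq_sum_card_bipartiteBelow (fun x b => x * b ∈ C)).symm

theorem ncard_mul_le_of_forall_le_ncard_inter (hX : X.Finite) (hXne : X.Nonempty)
    (hB : B.Finite) {κ m : ℝ} (hBC : ∀ b ∈ B, κ * X.ncard ≤ (X * {b} ∩ C).ncard)
    (hXC : ∀ x ∈ X, ((x • B ∩ C).ncard : ℝ) ≤ m) : B.ncard * κ ≤ m := by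
  have hXpos : (0 : ℝ) < X.ncard := by exact_mod_cast (ncard_pos hX).2 hXne
  have hlower : B.ncard * (κ * X.ncard) ≤ ∑ b ∈ hB.toFinset, ((X * {b} ∩ C).ncard : ℝ) := by
    rw [ncard_eq_toFinset_card B hB, ← nsmul_eq_mul]
    exact Finset.card_nsmul_le_sum _ _ _ fun b hb => hBC b (hB.mem_toFinset.1 hb)
  have hupper : ∑ x ∈ hX.toFinset, ((x • B ∩ C).ncard : ℝ) ≤ X.ncard * m := by
    rw [ncard_eq_toFinset_card X hX, ← nsmul_eq_mul]
    exact Finset.sum_le_card_nsmul _ _ _ fun x hx => hXC x (hX.mem_toFinset.1 hx)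
  have hcount : ∑ b ∈ hB.toFinset, ((X * {b} ∩ C).ncard : ℝ)
      = ∑ x ∈ hX.toFinset, ((x • B ∩ C).ncard : ℝ) := by
    exact_mod_cast sum_ncard_mul_singleton_inter_eq_sum_ncard_smul_inter hX hB C
  exact le_of_mul_le_mul_right (by linarith) hXpos

theorem ncard_mul_singleton_mul_sdiff_le (hX : X.Finite) (hA : A.Finite) (a s : G) :
    ((X * {a * s}) \ A).ncard ≤ ((X * {a}) \ A).ncard + ((A * {s}) \ A).ncard := by
  have hsub : (X * {a * s}) \ A ⊆ ((X * {a}) \ A) * {s} ∪ (A * {s}) \ A := by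
    rintro _ ⟨⟨x, hx, _, rfl, rfl⟩, hxas⟩
    by_cases hxa : x * a ∈ A
    · exact Or.inr ⟨⟨x * a, hxa, s, rfl, mul_assoc x a s⟩, hxas⟩
    · exact Or.inl ⟨x * a, ⟨⟨x, hx, a, rfl, rfl⟩, hxa⟩, s, rfl, mul_assoc x a s⟩
  calc ((X * {a * s}) \ A).ncard ≤ (((X * {a}) \ A) * {s} ∪ (A * {s}) \ A).ncard :=
        ncard_le_ncard hsub ((((hX.mul (finite_singleton a)).sdiff).mul (finite_singleton s)).union
          (hA.mul (finite_singleton s)).sdiff)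
    _ ≤ _ := (ncard_union_le _ _).trans_eq (by rw [ncard_mul_singleton])

end Set

section Stabilizers

open Set

variable {G : Type*} [Group G] {A B X : Set G} {N κ : ℝ}

theorem ncard_le_of_mem_stabL {x : G} {Y : Set G} (hA : A.Finite) (hx : x ∈ stabL A N)
    (hY : Y ⊆ (x • A) ∆ A) : (Y.ncard : ℝ) ≤ N :=
  le_trans (Nat.cast_le.2 <|
    ncard_le_ncard hY ((hA.smul_set.union hA).subset symmDiff_subset_union)) hx

theorem ncard_le_of_mem_stabR {s : G} {Y : Set G} (hA : A.Finite) (hs : s ∈ stabR A N)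
    (hY : Y ⊆ (A * {s}) ∆ A) : (Y.ncard : ℝ) ≤ N :=
  le_trans (Nat.cast_le.2 <| ncard_le_ncard hY
    (((hA.mul (finite_singleton s)).union hA).subset symmDiff_subset_union)) hs

theorem ncard_mul_le_of_subset_of_subset_stabL (hX : X.Finite) (hXne : X.Nonempty)
    (hA : A.Finite) (hXA : X ⊆ stabL A N) (hBA : B ⊆ A)
    (hB : ∀ b ∈ B, κ * X.ncard ≤ ((X * {b}) \ A).ncard) : B.ncard * κ ≤ N :=
  ncard_mul_le_of_forall_le_ncard_inter (C := Aᶜ) hX hXne (hA.subset hBA) hB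
    fun _ hx => ncard_le_of_mem_stabL hA (hXA hx) fun _ ⟨hy, hyA⟩ =>
      Or.inl ⟨smul_set_mono hBA hy, hyA⟩

theorem ncard_mul_le_of_disjoint_of_subset_stabL (hX : X.Finite) (hXne : X.Nonempty)
    (hA : A.Finite) (hXA : X ⊆ stabL A N) (hBA : Disjoint B A) (hκ : 0 < κ)
    (hB : ∀ b ∈ B, κ * X.ncard ≤ (X * {b} ∩ A).ncard) : B.ncard * κ ≤ N := by
  have hXpos : (0 : ℝ) < X.ncard := by exact_mod_cast (ncard_pos hX).2 hXne
  have hBfin : B.Finite := finite_of_forall_mul_singleton_inter_nonempty hX hA fun b hb =>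
    nonempty_of_ncard_ne_zero <| by exact_mod_cast ((mul_pos hκ hXpos).trans_le (hB b hb)).ne'
  exact ncard_mul_le_of_forall_le_ncard_inter hX hXne hBfin hB
    fun _ hx => ncard_le_of_mem_stabL hA (hXA hx) fun _ ⟨hy, hyA⟩ =>
      Or.inr ⟨hyA, disjoint_left.1 (disjoint_smul_set.2 hBA) hy⟩

theorem ncard_sub_sub_le_ncard_mul_singleton_mul_inter {a s : G} (hX : X.Finite)
    (hA : A.Finite) (ha : (((X * {a}) \ A).ncard : ℝ) < κ) (hs : s ∈ stabR A N) :
    X.ncard - κ - N ≤ (X * {a * s} ∩ A).ncard := by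
  have hsplit : ((X * {a * s} ∩ A).ncard : ℝ) + ((X * {a * s}) \ A).ncard = X.ncard := by
    rw [← ncard_mul_singleton X (a * s)]
    exact_mod_cast ncard_inter_add_ncard_sdiff_eq_ncard _ A (hX.mul (finite_singleton _))
  have hdiff : (((X * {a * s}) \ A).ncard : ℝ) ≤ ((X * {a}) \ A).ncard + ((A * {s}) \ A).ncard := by
    exact_mod_cast ncard_mul_singleton_mul_sdiff_le hX hA a s
  have hright := ncard_le_of_mem_stabR hA hs fun _ => Or.inl
  linarith

end Stabilizers

theorem structure_lemma_general {G : Type*} [Group G] (A : Set G)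
    (ε : ℝ) (hε0 : 0 < ε) (hε1 : ε < 1)
    (ν : ℝ) (hν0 : 0 < ν)
    (X S A' : Set G) (hX : X = stL A (ε ^ 2 / 162))
    (hν : ν ≤ (X.ncard : ℝ) / A.ncard)
    (hS : S = stR A (ε * ν / 9))
    (hA' : A' = {a ∈ A | (((X * {a}) \ A).ncard : ℝ) < ε / 9 * X.ncard}) :
    ∀ D : Set G, A' ⊆ D → D ⊆ A' * S → ((A ∆ D).ncard : ℝ) < ε * A.ncard := by
  intro D hA'D hDA'S
  -- `ncard` of an infinite set is `0`, so `0 < ν ≤ |X|/|A|` makes `X` and `A` finite and nonempty.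
  obtain ⟨hXpos, hApos⟩ : (0 : ℝ) < X.ncard ∧ (0 : ℝ) < A.ncard :=
    (div_pos_iff.1 (hν0.trans_le hν)).resolve_right fun h => h.2.not_ge (Nat.cast_nonneg _)
  have hXfin : X.Finite := Set.finite_of_ncard_pos (by exact_mod_cast hXpos)
  have hXne : X.Nonempty := Set.nonempty_of_ncard_ne_zero (by exact_mod_cast hXpos.ne')
  have hAfin : A.Finite := Set.finite_of_ncard_pos (by exact_mod_cast hApos)
  have hXA : X ⊆ stabL A (ε ^ 2 / 162 * A.ncard) := hX.le
  have hA_sdiff : ((A \ A').ncard : ℝ) * (ε / 9) ≤ ε ^ 2 / 162 * A.ncard :=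
    ncard_mul_le_of_subset_of_subset_stabL hXfin hXne hAfin hXA Set.sdiff_subset
      fun b ⟨hbA, hbA'⟩ => not_lt.1 fun h => hbA' (hA' ▸ ⟨hbA, h⟩)
  have hD_sdiff : ((D \ A).ncard : ℝ) * (7 / 9) ≤ ε ^ 2 / 162 * A.ncard := by
    refine ncard_mul_le_of_disjoint_of_subset_stabL hXfin hXne hAfin hXA Set.disjoint_sdiff_left
      (by norm_num) fun _ ⟨hd, _⟩ => ?_
    obtain ⟨a, ha, s, hs, rfl⟩ := hDA'S hd
    subst hA' hS
    have hνA : ν * A.ncard ≤ X.ncard := (le_div_iff₀ hApos).1 hν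
    have := ncard_sub_sub_le_ncard_mul_singleton_mul_inter hXfin hAfin ha.2 hs
    nlinarith
  have hAD : ((A ∆ D).ncard : ℝ) ≤ (A \ A').ncard + (D \ A).ncard := by
    exact_mod_cast Set.ncard_symmDiff_le_ncard_sdiff_add_ncard_sdiff hAfin hA'D
  have hA'A : ((A \ A').ncard : ℝ) ≤ ε / 18 * A.ncard :=
    le_of_mul_le_mul_right (by linarith) (by positivity : 0 < ε / 9)
  have hε2 : ε ^ 2 * A.ncard < ε * A.ncard := by gcongr; nlinarith
  linarith

/-- structure lemma, Lemma 3.4 of the paper: with `X = St^ℓ_{ε²/162}(A)`,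
`ν ≤ |X|/|A|`, `S = St^r_{εν/9}(A)` and `A' = {a ∈ A : |Xa \ A| < (ε/9)|X|}`, any
`D` with `A' ⊆ D ⊆ A'S` satisfies `|A △ D| < ε|A|`. -/
theorem structure_lemma {G : Type*} [Group G] (A : Set G)
    (hA : A.Finite) (hAne : A.Nonempty)
    (ε : ℝ) (hε0 : 0 < ε) (hε1 : ε < 1)
    (ν : ℝ) (hν0 : 0 < ν) (hν1 : ν < 1)
    (X S A' : Set G) (hX : X = stL A (ε ^ 2 / 162))
    (hν : ν ≤ (X.ncard : ℝ) / A.ncard)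
    (hS : S = stR A (ε * ν / 9))
    (hA' : A' = {a ∈ A | (((X * {a}) \ A).ncard : ℝ) < ε / 9 * X.ncard}) :
    ∀ D : Set G, A' ⊆ D → D ⊆ A' * S → ((A ∆ D).ncard : ℝ) < ε * A.ncard :=
  structure_lemma_general A ε hε0 hε1 ν hν0 X S A' hX hν hS hA'
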